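/- arXiv:1209.4557 — 6 statements merged into one kernel-verified Lean document; each statement's English description precedes it below -/
import Mathlib

section
/- Let a1, a2, b1, b2, c, d, r1, r2, r12, r012 be nonnegative reals with a1 > b1, a2 < b2, a1 + a2 = b1 + b2 = c, and r1 + r2 ≥ r12. Let 0 ≤ α0 ≤ α1 ≤ 1, and for each α ∈ [α0, α1] define K_α ⊆ ℝ³ as the set of nonnegative triples (R0, R1, R2) with R1 ≤ r1 − α·a1 − (1−α)·b1, R2 ≤ r2 − α·a2 − (1−α)·b2, R1 + R2 ≤ r12 − c, and R0 + R1 + R2 ≤ r012 − d. Assume each K_α is nonempty. Then the union of K_α over α ∈ [α0, α1] equals the set K of nonnegative triples satisfying R1 ≤ r1 − α0·a1 − (1−α0)·b1, R2 ≤ r2 − α1·a2 − (1−α1)·b2, R1 + R2 ≤ r12 − c, and R0 + R1 + R2 ≤ r012 − d. -/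
/-- union of the rate regions `K_α` over `α ∈ [α0, α1]`. -/
theorem stmt0 (a1 a2 b1 b2 c d r1 r2 r12 r012 α0 α1 : ℝ)
    (ha1 : 0 ≤ a1) (ha2 : 0 ≤ a2) (hb1 : 0 ≤ b1) (hb2 : 0 ≤ b2)
    (hc : 0 ≤ c) (hd : 0 ≤ d) (hr1 : 0 ≤ r1) (hr2 : 0 ≤ r2)
    (hr12 : 0 ≤ r12) (hr012 : 0 ≤ r012)
    (hab1 : a1 > b1) (hab2 : a2 < b2) (hsum1 : a1 + a2 = c) (hsum2 : b1 + b2 = c)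
    (hr : r1 + r2 ≥ r12)
    (h0 : 0 ≤ α0) (h01 : α0 ≤ α1) (h1 : α1 ≤ 1)
    (K : ℝ → Set (ℝ × ℝ × ℝ))
    (hK : ∀ α, K α = {R : ℝ × ℝ × ℝ |
        0 ≤ R.1 ∧ 0 ≤ R.2.1 ∧ 0 ≤ R.2.2 ∧
        R.2.1 ≤ r1 - α * a1 - (1 - α) * b1 ∧
        R.2.2 ≤ r2 - α * a2 - (1 - α) * b2 ∧
        R.2.1 + R.2.2 ≤ r12 - c ∧
        R.1 + R.2.1 + R.2.2 ≤ r012 - d})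
    (hne : ∀ α ∈ Set.Icc α0 α1, (K α).Nonempty) :
    (⋃ α ∈ Set.Icc α0 α1, K α) = {R : ℝ × ℝ × ℝ |
        0 ≤ R.1 ∧ 0 ≤ R.2.1 ∧ 0 ≤ R.2.2 ∧
        R.2.1 ≤ r1 - α0 * a1 - (1 - α0) * b1 ∧
        R.2.2 ≤ r2 - α1 * a2 - (1 - α1) * b2 ∧
        R.2.1 + R.2.2 ≤ r12 - c ∧
        R.1 + R.2.1 + R.2.2 ≤ r012 - d} := by
  have hAB : 0 < a1 - b1 := by linarith
  ext R
  simp only [Set.mem_iUnion, hK, Set.mem_setOf_eq, Set.mem_Icc, exists_prop]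
  constructor
  · rintro ⟨α, ⟨hα0, hα1⟩, p1, p2, p3, p4, p5, p6, p7⟩
    exact ⟨p1, p2, p3, by nlinarith, by nlinarith, p6, p7⟩
  · rintro ⟨p1, p2, p3, p4, p5, p6, p7⟩
    set t := (r1 - b1 - R.2.1) / (a1 - b1) with htdef
    have ht : t * (a1 - b1) = r1 - b1 - R.2.1 := div_mul_cancel₀ _ (ne_of_gt hAB)
    have ht0 : α0 ≤ t := by
      rw [htdef, le_div_iff₀ hAB]; nlinarith
    refine ⟨min α1 t, ⟨le_min h01 ht0, min_le_left _ _⟩, p1, p2, p3, ?_, ?_, p6, p7⟩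
    · rcases le_total α1 t with h | h
      · rw [min_eq_left h]; nlinarith
      · rw [min_eq_right h]; nlinarith
    · rcases le_total α1 t with h | h
      · rw [min_eq_left h]; exact p5
      · rw [min_eq_right h]; nlinarith
end

section
/- Let r1, r2, r12, r012, a, b, c be nonnegative reals with max(r1, r2) ≤ r12 ≤ r1 + r2 and a ≤ b. Let α0, α1 ∈ [0,1] be such that for every α ∈ [α0, α1] the set K_α of nonnegative triples (R0, R1, R2) with R1 ≤ r1 − α·a, R2 ≤ r2 − (1−α)·b, R1 + R2 ≤ r12 − α·a − (1−α)·b, and R0 + R1 + R2 ≤ r012 − c is nonempty. Then the convex hull of the union of the K_α over α ∈ [α0, α1] equals the set K of nonnegative triples satisfying: R1 ≤ r1 − α0·a, R2 ≤ r2 − (1−α1)·b, R1 + R2 ≤ r12 − α1·a − (1−α1)·b, b·R1 + a·R2 ≤ r12·a + r1·(b−a) − a·b, and R0 + R1 + R2 ≤ r012 − c. -/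
set_option maxHeartbeats 2000000 in
/-- the convex hull of the union of the rate regions `K_α` equals `K`. -/
theorem stmt1 (r1 r2 r12 r012 a b c α0 α1 : ℝ)
    (hr1 : 0 ≤ r1) (hr2 : 0 ≤ r2) (hr12 : 0 ≤ r12) (hr012 : 0 ≤ r012)
    (ha : 0 ≤ a) (hb : 0 ≤ b) (hc : 0 ≤ c)
    (hmax : max r1 r2 ≤ r12) (hsum : r12 ≤ r1 + r2) (hab : a ≤ b)
    (h0 : 0 ≤ α0) (h01 : α0 ≤ α1) (h1 : α1 ≤ 1)
    (K : ℝ → Set (ℝ × ℝ × ℝ))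
    (hK : ∀ α, K α = {R : ℝ × ℝ × ℝ |
        0 ≤ R.1 ∧ 0 ≤ R.2.1 ∧ 0 ≤ R.2.2 ∧
        R.2.1 ≤ r1 - α * a ∧
        R.2.2 ≤ r2 - (1 - α) * b ∧
        R.2.1 + R.2.2 ≤ r12 - α * a - (1 - α) * b ∧
        R.1 + R.2.1 + R.2.2 ≤ r012 - c})
    (hne : ∀ α ∈ Set.Icc α0 α1, (K α).Nonempty) :
    convexHull ℝ (⋃ α ∈ Set.Icc α0 α1, K α) = {R : ℝ × ℝ × ℝ |
        0 ≤ R.1 ∧ 0 ≤ R.2.1 ∧ 0 ≤ R.2.2 ∧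
        R.2.1 ≤ r1 - α0 * a ∧
        R.2.2 ≤ r2 - (1 - α1) * b ∧
        R.2.1 + R.2.2 ≤ r12 - α1 * a - (1 - α1) * b ∧
        b * R.2.1 + a * R.2.2 ≤ r12 * a + r1 * (b - a) - a * b ∧
        R.1 + R.2.1 + R.2.2 ≤ r012 - c} := by
  apply Set.Subset.antisymm
  · apply convexHull_min
    · rintro R hR
      simp only [Set.mem_iUnion, Set.mem_Icc] at hR
      obtain ⟨α, ⟨hα0, hα1⟩, hmem⟩ := hR
      rw [hK] at hmem
      obtain ⟨p0, p1, p2, q1, q2, q3, q4⟩ := hmem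
      refine ⟨p0, p1, p2, ?_, ?_, ?_, ?_, q4⟩
      · nlinarith
      · nlinarith
      · nlinarith
      · nlinarith
    · rintro ⟨x0, x1, x2⟩ hx ⟨y0, y1, y2⟩ hy p q hp hq hpq
      simp only [Set.mem_setOf_eq] at hx hy ⊢
      obtain ⟨a0, a1, a2, a3, a4, a5, a6, a7⟩ := hx
      obtain ⟨b0, b1, b2, b3, b4, b5, b6, b7⟩ := hy
      have hq' : q = 1 - p := by linarith
      subst hq'
      simp only [Prod.smul_mk, Prod.mk_add_mk, smul_eq_mul]
      refine ⟨?_, ?_, ?_, ?_, ?_, ?_, ?_, ?_⟩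
      · nlinarith [mul_nonneg hp a0, mul_nonneg hq b0]
      · nlinarith [mul_nonneg hp a1, mul_nonneg hq b1]
      · nlinarith [mul_nonneg hp a2, mul_nonneg hq b2]
      · nlinarith [mul_le_mul_of_nonneg_left a3 hp, mul_le_mul_of_nonneg_left b3 hq]
      · nlinarith [mul_le_mul_of_nonneg_left a4 hp, mul_le_mul_of_nonneg_left b4 hq]
      · nlinarith [mul_le_mul_of_nonneg_left a5 hp, mul_le_mul_of_nonneg_left b5 hq]
      · nlinarith [mul_le_mul_of_nonneg_left a6 hp, mul_le_mul_of_nonneg_left b6 hq]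
      · nlinarith [mul_le_mul_of_nonneg_left a7 hp, mul_le_mul_of_nonneg_left b7 hq]
  · intro R hR
    obtain ⟨p0, p1, p2, q1, q2, q3, q4, q5⟩ := hR
    apply subset_convexHull
    by_cases hcase : R.2.1 ≤ r1 - α1 * a
    · refine Set.mem_biUnion (Set.mem_Icc.mpr ⟨h01, le_refl α1⟩) ?_
      rw [hK]
      exact ⟨p0, p1, p2, hcase, q2, q3, q5⟩
    · push_neg at hcase
      have hapos : 0 < a := by nlinarith
      set α : ℝ := (r1 - R.2.1) / a with hαdef
      have hαa : α * a = r1 - R.2.1 := div_mul_cancel₀ _ (ne_of_gt hapos)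
      have hαle : α0 ≤ α := by
        rw [hαdef, le_div_iff₀ hapos]; linarith
      have hαge : α ≤ α1 := by
        rw [hαdef, div_le_iff₀ hapos]; linarith
      refine Set.mem_biUnion (Set.mem_Icc.mpr ⟨hαle, hαge⟩) ?_
      rw [hK]
      have key : a * R.2.2 ≤ a * (r12 - r1 - (1 - α) * b) := by nlinarith
      have key' : R.2.2 ≤ r12 - r1 - (1 - α) * b := le_of_mul_le_mul_left key hapos
      refine ⟨p0, p1, p2, by linarith, by nlinarith, by linarith, q5⟩
end

section
/- Let W_b : X → P(T) and W_e : X → P(Z) be discrete channels on finite alphabets. Then the following are equivalent: (i) for every Markov chain (U, X, (T,Z)) with P_{T|X} = W_b and P_{Z|X} = W_e one has I(Z ∧ U) ≥ I(T ∧ U); (ii) the function P_X ↦ I(Z ∧ X) − I(T ∧ X) on the probability simplex P(X) is concave. -/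
open scoped BigOperators

/-- A function on a finite set is a probability mass function. -/
def IsPMF {A : Type} [Fintype A] (p : A → ℝ) : Prop :=
  (∀ a, 0 ≤ p a) ∧ ∑ a, p a = 1

/-- Shannon entropy (base 2) of a pmf on a finite set. -/
noncomputable def entropy {A : Type} [Fintype A] (p : A → ℝ) : ℝ :=
  -∑ a, p a * Real.logb 2 (p a)

/-- Mutual information of a joint pmf on a finite product. -/
noncomputable def mutualInfo {A B : Type} [Fintype A] [Fintype B]
    (p : A × B → ℝ) : ℝ :=
  entropy (fun a => ∑ b, p (a, b)) + entropy (fun b => ∑ a, p (a, b)) - entropy p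

/-!
For a nonnegative, not necessarily normalised input vector `s` put
`D(s) = H(W_e s) - H(W_b s)`, where `W s = ∑ₓ s(x) W(x, ·)` is the output of the channel `W`.
Splitting the entropies of the joint distributions gives
`I(Z ∧ U) - I(T ∧ U) = D(∑ᵤ sᵤ) - ∑ᵤ D(sᵤ)` with `sᵤ = P_{UX}(u, ·)`, and
`I(Z ∧ X) - I(T ∧ X) = D(P_X) - (a linear function of P_X)`.
Both channels preserve total mass, so the `c log c` terms cancel in `D(c • s)` and `D` is
positively homogeneous. For such a function, superadditivity on the nonnegative cone, which is
condition (i), is equivalent to concavity on the simplex, which is condition (ii).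
-/

open Real Finset

section Entropy

variable {A : Type} [Fintype A]

lemma entropy_eq_sum_negMulLog (p : A → ℝ) : entropy p = (∑ a, negMulLog (p a)) / log 2 := by
  rw [entropy, sum_div, ← sum_neg_distrib]
  refine sum_congr rfl fun a _ => ?_
  rw [logb, negMulLog]
  ring

lemma entropy_smul (c : ℝ) (p : A → ℝ) :
    entropy (c • p) = c * entropy p + (∑ a, p a) * negMulLog c / log 2 := by
  simp only [entropy_eq_sum_negMulLog, Pi.smul_apply, smul_eq_mul, negMulLog_mul,
    sum_add_distrib, ← sum_mul, ← mul_sum]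
  ring

end Entropy

section Channel

variable {X C : Type} [Fintype X]

noncomputable def outputDist (W : X → C → ℝ) (s : X → ℝ) : C → ℝ :=
  fun c => ∑ x, s x * W x c

lemma outputDist_smul (W : X → C → ℝ) (r : ℝ) (s : X → ℝ) :
    outputDist W (r • s) = r • outputDist W s := by
  ext c
  simp only [outputDist, Pi.smul_apply, smul_eq_mul, mul_sum, mul_assoc]

variable [Fintype C]

lemma sum_outputDist {W : X → C → ℝ} (hW : ∀ x, ∑ c, W x c = 1) (s : X → ℝ) :
    ∑ c, outputDist W s c = ∑ x, s x := by
  simp only [outputDist]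
  rw [sum_comm]
  simp only [← mul_sum, hW, mul_one]

lemma entropy_input_mul_channel {W : X → C → ℝ} (hW : ∀ x, ∑ c, W x c = 1) (p : X → ℝ) :
    entropy (fun xc : X × C => p xc.1 * W xc.1 xc.2)
      = entropy p + ∑ x, p x * entropy (W x) := by
  simp only [entropy_eq_sum_negMulLog, Fintype.sum_prod_type, negMulLog_mul, sum_add_distrib,
    ← sum_mul, ← mul_sum, hW, one_mul, mul_div_assoc', ← sum_div, add_div]

lemma mutualInfo_input_mul_channel {W : X → C → ℝ} (hW : ∀ x, ∑ c, W x c = 1) (p : X → ℝ) :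
    mutualInfo (fun xc : X × C => p xc.1 * W xc.1 xc.2)
      = entropy (outputDist W p) - ∑ x, p x * entropy (W x) := by
  simp only [mutualInfo, ← mul_sum, hW, mul_one, entropy_input_mul_channel hW]
  unfold outputDist
  ring

lemma mutualInfo_markov {U : Type} [Fintype U] {W : X → C → ℝ} (hW : ∀ x, ∑ c, W x c = 1)
    (pUX : U × X → ℝ) :
    mutualInfo (fun uc : U × C => ∑ x, pUX (uc.1, x) * W x uc.2)
      = entropy (fun u => ∑ x, pUX (u, x)) + entropy (outputDist W fun x => ∑ u, pUX (u, x))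
        - ∑ u, entropy (outputDist W fun x => pUX (u, x)) := by
  have hU : (fun u => ∑ c, ∑ x, pUX (u, x) * W x c) = fun u => ∑ x, pUX (u, x) :=
    funext fun u => sum_outputDist hW fun x => pUX (u, x)
  have hC : (fun c => ∑ u, ∑ x, pUX (u, x) * W x c)
      = outputDist W fun x => ∑ u, pUX (u, x) := by
    ext c
    rw [outputDist, sum_comm]
    simp only [sum_mul]
  have hUC : entropy (fun uc : U × C => ∑ x, pUX (uc.1, x) * W x uc.2)
      = ∑ u, entropy (outputDist W fun x => pUX (u, x)) := by
    simp only [entropy, outputDist, Fintype.sum_prod_type, sum_neg_distrib]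
  rw [mutualInfo, hU, hC, hUC]

end Channel

section Gap

variable {X T Z : Type} [Fintype X] [Fintype T] [Fintype Z]

noncomputable def entropyGap (Wb : X → T → ℝ) (We : X → Z → ℝ) (s : X → ℝ) : ℝ :=
  entropy (outputDist We s) - entropy (outputDist Wb s)

noncomputable def mutualInfoGap (Wb : X → T → ℝ) (We : X → Z → ℝ) (p : X → ℝ) : ℝ :=
  mutualInfo (fun xz : X × Z => p xz.1 * We xz.1 xz.2) -
    mutualInfo (fun xt : X × T => p xt.1 * Wb xt.1 xt.2)

variable {Wb : X → T → ℝ} {We : X → Z → ℝ}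

lemma entropyGap_smul (hWb : ∀ x, ∑ t, Wb x t = 1) (hWe : ∀ x, ∑ z, We x z = 1)
    (r : ℝ) (s : X → ℝ) : entropyGap Wb We (r • s) = r * entropyGap Wb We s := by
  simp only [entropyGap, outputDist_smul, entropy_smul, sum_outputDist hWb, sum_outputDist hWe]
  ring

lemma mutualInfoGap_eq (hWb : ∀ x, ∑ t, Wb x t = 1) (hWe : ∀ x, ∑ z, We x z = 1) :
    mutualInfoGap Wb We = entropyGap Wb We
      - Fintype.linearCombination ℝ (fun x => entropy (We x) - entropy (Wb x)) := by
  ext p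
  simp only [mutualInfoGap, mutualInfo_input_mul_channel hWb, mutualInfo_input_mul_channel hWe,
    Pi.sub_apply, Fintype.linearCombination_apply, entropyGap, smul_eq_mul, mul_sub,
    sum_sub_distrib]
  ring

lemma mutualInfo_sub_mutualInfo_markov {U : Type} [Fintype U]
    (hWb : ∀ x, ∑ t, Wb x t = 1) (hWe : ∀ x, ∑ z, We x z = 1) (pUX : U × X → ℝ) :
    mutualInfo (fun uz : U × Z => ∑ x, pUX (uz.1, x) * We x uz.2)
        - mutualInfo (fun ut : U × T => ∑ x, pUX (ut.1, x) * Wb x ut.2)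
      = entropyGap Wb We (fun x => ∑ u, pUX (u, x))
        - ∑ u, entropyGap Wb We fun x => pUX (u, x) := by
  simp only [mutualInfo_markov hWb, mutualInfo_markov hWe, entropyGap, sum_sub_distrib]
  ring

end Gap

section Concavity

lemma concaveOn_sub_linearMap_iff {𝕜 E β : Type*} [Semiring 𝕜] [PartialOrder 𝕜]
    [AddCommGroup E] [Module 𝕜 E] [AddCommGroup β] [PartialOrder β] [IsOrderedAddMonoid β]
    [Module 𝕜 β] {s : Set E} (hs : Convex 𝕜 s) (ℓ : E →ₗ[𝕜] β) {f : E → β} :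
    ConcaveOn 𝕜 s (f - ⇑ℓ) ↔ ConcaveOn 𝕜 s f :=
  ⟨fun h => by simpa using h.add (ℓ.concaveOn hs), fun h => h.sub (ℓ.convexOn hs)⟩

variable {X : Type} [Fintype X]

lemma concaveOn_stdSimplex_iff (f : (X → ℝ) → ℝ) :
    ConcaveOn ℝ (stdSimplex ℝ X) f ↔ ∀ p q : X → ℝ, IsPMF p → IsPMF q → ∀ θ : ℝ, 0 ≤ θ → θ ≤ 1 →
      θ * f p + (1 - θ) * f q ≤ f (fun x => θ * p x + (1 - θ) * q x) := by
  refine ⟨fun hf p q hp hq θ hθ₀ hθ₁ => ?_, fun hf => ⟨convex_stdSimplex ℝ X, ?_⟩⟩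
  · exact hf.2 hp hq hθ₀ (sub_nonneg.2 hθ₁) (add_sub_cancel θ 1)
  · rintro p hp q hq a b ha hb hab
    obtain rfl : b = 1 - a := by linarith
    exact hf p q hp hq a ha (by linarith)

variable {f : (X → ℝ) → ℝ}

lemma superadditive_of_concaveOn_stdSimplex
    (hhom : ∀ r : ℝ, 0 ≤ r → ∀ s, 0 ≤ s → f (r • s) = r * f s)
    (hf : ConcaveOn ℝ (stdSimplex ℝ X) f) {s t : X → ℝ} (hs : 0 ≤ s) (ht : 0 ≤ t) :
    f s + f t ≤ f (s + t) := by
  have hf0 : f 0 = 0 := by simpa using hhom 0 le_rfl 0 le_rfl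
  rcases (sum_nonneg fun x _ => hs x : 0 ≤ ∑ x, s x).eq_or_lt with ha | ha
  · obtain rfl : s = 0 := (Fintype.sum_eq_zero_iff_of_nonneg hs).1 ha.symm
    simp [hf0]
  rcases (sum_nonneg fun x _ => ht x : 0 ≤ ∑ x, t x).eq_or_lt with hb | hb
  · obtain rfl : t = 0 := (Fintype.sum_eq_zero_iff_of_nonneg ht).1 hb.symm
    simp [hf0]
  have hdecomp : ∀ u : X → ℝ, 0 ≤ u → 0 < ∑ x, u x →
      ∃ c : ℝ, 0 < c ∧ ∃ p ∈ stdSimplex ℝ X, u = c • p :=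
    fun u hu hpos => ⟨∑ x, u x, hpos, (∑ x, u x)⁻¹ • u,
      ⟨fun x => mul_nonneg (inv_nonneg.2 hpos.le) (hu x), by simp [← mul_sum, hpos.ne']⟩,
      (smul_inv_smul₀ hpos.ne' u).symm⟩
  obtain ⟨a, ha₀, p, hp, rfl⟩ := hdecomp s hs ha
  obtain ⟨b, hb₀, q, hq, rfl⟩ := hdecomp t ht hb
  have hab : 0 < a + b := add_pos ha₀ hb₀
  have hθ : a / (a + b) + b / (a + b) = 1 := by field_simp
  have hmix := convex_stdSimplex ℝ X hp hq (by positivity) (by positivity) hθ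
  calc f (a • p) + f (b • q)
      = (a + b) * ((a / (a + b)) • f p + (b / (a + b)) • f q) := by
        rw [hhom a ha₀.le p hp.1, hhom b hb₀.le q hq.1, smul_eq_mul, smul_eq_mul]
        field_simp
    _ ≤ (a + b) * f ((a / (a + b)) • p + (b / (a + b)) • q) := by
        gcongr
        exact hf.2 hp hq (by positivity) (by positivity) hθ
    _ = f (a • p + b • q) := by
        rw [← hhom _ hab.le _ hmix.1, smul_add, smul_smul, smul_smul]
        field_simp

lemma concaveOn_stdSimplex_iff_forall_sum_le
    (hhom : ∀ r : ℝ, 0 ≤ r → ∀ s, 0 ≤ s → f (r • s) = r * f s) :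
    ConcaveOn ℝ (stdSimplex ℝ X) f ↔ ∀ (U : Type) [Fintype U] (pUX : U × X → ℝ), IsPMF pUX →
      ∑ u, f (fun x => pUX (u, x)) ≤ f (fun x => ∑ u, pUX (u, x)) := by
  refine ⟨fun hf U _ pUX hpUX => ?_, fun h => ⟨convex_stdSimplex ℝ X, ?_⟩⟩
  · have hf0 : f 0 = 0 := by simpa using hhom 0 le_rfl 0 le_rfl
    have hsum := le_sum_of_subadditive_on_pred (fun s => -f s) (fun s : X → ℝ => 0 ≤ s)
      (by simp [hf0])
      (fun s t hs ht => by linarith [superadditive_of_concaveOn_stdSimplex hhom hf hs ht])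
      (fun s t hs ht => add_nonneg hs ht) (fun u x => pUX (u, x)) (s := univ)
      (fun u _ x => hpUX.1 (u, x))
    simpa only [sum_neg_distrib, neg_le_neg_iff, ← sum_fn] using hsum
  · rintro p hp q hq a b ha hb hab
    let pUX : Bool × X → ℝ := fun ux => cond ux.1 (a * p ux.2) (b * q ux.2)
    have hpUX : IsPMF pUX := by
      refine ⟨?_, ?_⟩
      · rintro ⟨_ | _, x⟩
        · exact mul_nonneg hb (hq.1 x)
        · exact mul_nonneg ha (hp.1 x)
      · simp [pUX, Fintype.sum_prod_type, ← mul_sum, hp.2, hq.2, hab]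
    have hBool := h Bool pUX hpUX
    simp only [Fintype.sum_bool, pUX, cond_true, cond_false] at hBool
    rw [smul_eq_mul, smul_eq_mul, ← hhom a ha p hp.1, ← hhom b hb q hq.1]
    exact hBool

end Concavity

/-- van Dijk's characterization: `W_e` is less noisy than `W_b` iff
`P_X ↦ I(Z ∧ X) − I(T ∧ X)` is concave on the simplex. -/
theorem stmt5 {X T Z : Type} [Fintype X] [Fintype T] [Fintype Z]
    (Wb : X → T → ℝ) (We : X → Z → ℝ)
    (hWb : ∀ x, IsPMF (Wb x)) (hWe : ∀ x, IsPMF (We x)) :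
    (∀ (U : Type) [Fintype U] (pUX : U × X → ℝ), IsPMF pUX →
        mutualInfo (fun uz : U × Z => ∑ x, pUX (uz.1, x) * We x uz.2) ≥
          mutualInfo (fun ut : U × T => ∑ x, pUX (ut.1, x) * Wb x ut.2)) ↔
    (∀ p q : X → ℝ, IsPMF p → IsPMF q → ∀ θ : ℝ, 0 ≤ θ → θ ≤ 1 →
        θ * (mutualInfo (fun xz : X × Z => p xz.1 * We xz.1 xz.2) -
              mutualInfo (fun xt : X × T => p xt.1 * Wb xt.1 xt.2)) +
        (1 - θ) * (mutualInfo (fun xz : X × Z => q xz.1 * We xz.1 xz.2) -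
              mutualInfo (fun xt : X × T => q xt.1 * Wb xt.1 xt.2)) ≤
        mutualInfo (fun xz : X × Z => (θ * p xz.1 + (1 - θ) * q xz.1) * We xz.1 xz.2) -
          mutualInfo (fun xt : X × T => (θ * p xt.1 + (1 - θ) * q xt.1) * Wb xt.1 xt.2)) := by
  have hb : ∀ x, ∑ t, Wb x t = 1 := fun x => (hWb x).2
  have he : ∀ x, ∑ z, We x z = 1 := fun x => (hWe x).2
  calc _ ↔ ∀ (U : Type) [Fintype U] (pUX : U × X → ℝ), IsPMF pUX →
          ∑ u, entropyGap Wb We (fun x => pUX (u, x)) ≤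
            entropyGap Wb We (fun x => ∑ u, pUX (u, x)) := by
        simp only [ge_iff_le, ← sub_nonneg (b := mutualInfo _),
          mutualInfo_sub_mutualInfo_markov hb he]
        simp only [sub_nonneg]
    _ ↔ ConcaveOn ℝ (stdSimplex ℝ X) (entropyGap Wb We) :=
        (concaveOn_stdSimplex_iff_forall_sum_le fun r _ s _ => entropyGap_smul hb he r s).symm
    _ ↔ ConcaveOn ℝ (stdSimplex ℝ X) (mutualInfoGap Wb We) := by
        rw [mutualInfoGap_eq hb he, concaveOn_sub_linearMap_iff (convex_stdSimplex ℝ X)]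
    _ ↔ _ := concaveOn_stdSimplex_iff _
end

section
/- Let W_b : X×Y → P(T) and W_e : X×Y → P(Z) be multiple-access channels on finite alphabets. Then I(Z ∧ V1 V2) ≥ I(T ∧ V1 V2) holds for every Markov chain ((V1,V2), (X,Y), (T,Z)) in which V1 and V2 are independent, X depends only on V1, Y depends only on V2, P_{T|XY} = W_b and P_{Z|XY} = W_e, if and only if the function (P_X, P_Y) ↦ I(Z ∧ X Y) − I(T ∧ X Y), defined on pairs of product input distributions (X, Y independent), is concave separately in each of its two arguments. -/
open scoped BigOperators

/-- The difference `I(Z ∧ X Y) − I(T ∧ X Y)` for independent inputs `P_X, P_Y`. -/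
noncomputable def macDiff {X Y T Z : Type} [Fintype X] [Fintype Y] [Fintype T] [Fintype Z]
    (Wb : X × Y → T → ℝ) (We : X × Y → Z → ℝ) (pX : X → ℝ) (pY : Y → ℝ) : ℝ :=
  mutualInfo (fun xyz : (X × Y) × Z => pX xyz.1.1 * pY xyz.1.2 * We xyz.1 xyz.2) -
    mutualInfo (fun xyt : (X × Y) × T => pX xyt.1.1 * pY xyt.1.2 * Wb xyt.1 xyt.2)

section Aux

set_option linter.unusedVariables false

lemma mul_logb_mul (x y : ℝ) :
    x * y * Real.logb 2 (x * y) = x * Real.logb 2 x * y + x * (y * Real.logb 2 y) := by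
  rcases eq_or_ne x 0 with hx | hx
  · simp [hx]
  rcases eq_or_ne y 0 with hy | hy
  · simp [hy, Real.logb]
  · rw [Real.logb_mul hx hy]; ring

lemma entropy_chain {A B : Type} [Fintype A] [Fintype B] (p : A × B → ℝ)
    (q : A → ℝ) (K : A → B → ℝ) (hp : ∀ a b, p (a, b) = q a * K a b)
    (hK : ∀ a, ∑ b, K a b = 1) :
    entropy p = entropy q + ∑ a, q a * entropy (K a) := by
  have : entropy p = -∑ a, ∑ b, q a * K a b * Real.logb 2 (q a * K a b) := by
    unfold entropy
    rw [show (∑ a : A × B, p a * Real.logb 2 (p a))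
        = ∑ a, ∑ b, p (a, b) * Real.logb 2 (p (a, b)) from Fintype.sum_prod_type _]
    simp_rw [hp]
  rw [this]
  unfold entropy
  have : ∀ a, ∑ b, q a * K a b * Real.logb 2 (q a * K a b)
      = q a * Real.logb 2 (q a) + q a * (∑ b, K a b * Real.logb 2 (K a b)) := by
    intro a
    rw [Finset.mul_sum]
    rw [show q a * Real.logb 2 (q a) = q a * Real.logb 2 (q a) * ∑ b, K a b by rw [hK]; ring]
    rw [Finset.mul_sum, ← Finset.sum_add_distrib]
    exact Finset.sum_congr rfl fun b _ => mul_logb_mul _ _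
  simp_rw [this]
  rw [Finset.sum_add_distrib]
  simp only [mul_neg]
  rw [Finset.sum_neg_distrib]
  ring

lemma MI_chain {A B : Type} [Fintype A] [Fintype B] (p : A × B → ℝ)
    (q : A → ℝ) (K : A → B → ℝ) (hp : ∀ a b, p (a, b) = q a * K a b)
    (hK : ∀ a, ∑ b, K a b = 1) :
    mutualInfo p = entropy (fun b => ∑ a, q a * K a b) - ∑ a, q a * entropy (K a) := by
  unfold mutualInfo
  rw [entropy_chain p q K hp hK]
  have h1 : (fun a => ∑ b, p (a, b)) = q := by
    funext a; simp_rw [hp]; rw [← Finset.mul_sum, hK, mul_one]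
  have h2 : (fun b => ∑ a, p (a, b)) = fun b => ∑ a, q a * K a b := by
    funext b; simp_rw [hp]
  rw [h1, h2]; ring

lemma sum_comm4 {α β γ δ : Type} [Fintype α] [Fintype β] [Fintype γ] [Fintype δ]
    (f : α → β → γ → δ → ℝ) :
    ∑ a, ∑ b, ∑ c, ∑ d, f a b c d = ∑ c, ∑ d, ∑ a, ∑ b, f a b c d :=
  calc ∑ a, ∑ b, ∑ c, ∑ d, f a b c d
      = ∑ a, ∑ c, ∑ b, ∑ d, f a b c d :=
        Finset.sum_congr rfl fun a _ => Finset.sum_comm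
    _ = ∑ c, ∑ a, ∑ b, ∑ d, f a b c d := Finset.sum_comm
    _ = ∑ c, ∑ a, ∑ d, ∑ b, f a b c d :=
        Finset.sum_congr rfl fun c _ => Finset.sum_congr rfl fun a _ => Finset.sum_comm
    _ = ∑ c, ∑ d, ∑ a, ∑ b, f a b c d :=
        Finset.sum_congr rfl fun c _ => Finset.sum_comm

lemma swap4 {V1 V2 X Y : Type} [Fintype V1] [Fintype V2] [Fintype X] [Fintype Y]
    (pV1 : V1 → ℝ) (pV2 : V2 → ℝ) (PX : V1 → X → ℝ) (PY : V2 → Y → ℝ) (c : X → Y → ℝ) :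
    ∑ v1, ∑ v2, pV1 v1 * pV2 v2 * ∑ x, ∑ y, PX v1 x * PY v2 y * c x y
      = ∑ x, ∑ y, (∑ v1, pV1 v1 * PX v1 x) * (∑ v2, pV2 v2 * PY v2 y) * c x y := by
  have key : ∀ x y, (∑ v1, pV1 v1 * PX v1 x) * (∑ v2, pV2 v2 * PY v2 y) * c x y
      = ∑ v1, ∑ v2, pV1 v1 * pV2 v2 * (PX v1 x * PY v2 y * c x y) := by
    intro x y
    rw [Finset.sum_mul_sum, Finset.sum_mul]
    refine Finset.sum_congr rfl fun v1 _ => ?_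
    rw [Finset.sum_mul]
    exact Finset.sum_congr rfl fun v2 _ => by ring
  simp_rw [key, Finset.mul_sum]
  exact sum_comm4 _

lemma key_identity {V1 V2 X Y Z : Type} [Fintype V1] [Fintype V2] [Fintype X] [Fintype Y]
    [Fintype Z] (W : X × Y → Z → ℝ) (hW : ∀ xy, ∑ z, W xy z = 1)
    (pV1 : V1 → ℝ) (pV2 : V2 → ℝ) (PX : V1 → X → ℝ) (PY : V2 → Y → ℝ)
    (hPX : ∀ v, ∑ x, PX v x = 1) (hPY : ∀ v, ∑ y, PY v y = 1) :
    mutualInfo (fun vz : (V1 × V2) × Z =>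
        pV1 vz.1.1 * pV2 vz.1.2 * ∑ x, ∑ y, PX vz.1.1 x * PY vz.1.2 y * W (x, y) vz.2)
      = mutualInfo (fun xyz : (X × Y) × Z =>
          (∑ v1, pV1 v1 * PX v1 xyz.1.1) * (∑ v2, pV2 v2 * PY v2 xyz.1.2) * W xyz.1 xyz.2)
        - ∑ v1, ∑ v2, pV1 v1 * pV2 v2 *
            mutualInfo (fun xyz : (X × Y) × Z =>
              PX v1 xyz.1.1 * PY v2 xyz.1.2 * W xyz.1 xyz.2) := by
  have hK : ∀ v : V1 × V2, ∑ z, (∑ x, ∑ y, PX v.1 x * PY v.2 y * W (x, y) z) = 1 := by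
    intro v
    have h : ∑ z, (∑ x, ∑ y, PX v.1 x * PY v.2 y * W (x, y) z)
        = ∑ x, ∑ y, PX v.1 x * PY v.2 y * ∑ z, W (x, y) z := by
      rw [Finset.sum_comm]
      refine Finset.sum_congr rfl fun x _ => ?_
      rw [Finset.sum_comm]
      refine Finset.sum_congr rfl fun y _ => ?_
      rw [Finset.mul_sum]
    rw [h]
    simp_rw [hW, mul_one, ← Finset.mul_sum, hPY, mul_one]
    exact hPX v.1
  have e1 := MI_chain
      (fun vz : (V1 × V2) × Z =>
        pV1 vz.1.1 * pV2 vz.1.2 * ∑ x, ∑ y, PX vz.1.1 x * PY vz.1.2 y * W (x, y) vz.2)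
      (fun v => pV1 v.1 * pV2 v.2)
      (fun v z => ∑ x, ∑ y, PX v.1 x * PY v.2 y * W (x, y) z)
      (fun a b => rfl) hK
  have e2 := MI_chain
      (fun xyz : (X × Y) × Z =>
        (∑ v1, pV1 v1 * PX v1 xyz.1.1) * (∑ v2, pV2 v2 * PY v2 xyz.1.2) * W xyz.1 xyz.2)
      (fun xy : X × Y => (∑ v1, pV1 v1 * PX v1 xy.1) * (∑ v2, pV2 v2 * PY v2 xy.2))
      W (fun a b => rfl) hW
  have e3 : ∀ (v1 : V1) (v2 : V2),
      mutualInfo (fun xyz : (X × Y) × Z => PX v1 xyz.1.1 * PY v2 xyz.1.2 * W xyz.1 xyz.2)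
        = entropy (fun z => ∑ xy : X × Y, PX v1 xy.1 * PY v2 xy.2 * W xy z)
          - ∑ xy : X × Y, PX v1 xy.1 * PY v2 xy.2 * entropy (W xy) :=
    fun v1 v2 => MI_chain _ (fun xy : X × Y => PX v1 xy.1 * PY v2 xy.2) W (fun a b => rfl) hW
  rw [e1, e2]
  simp_rw [e3]
  have i1 : (fun b => ∑ v : V1 × V2, pV1 v.1 * pV2 v.2 *
        ∑ x, ∑ y, PX v.1 x * PY v.2 y * W (x, y) b)
      = (fun b => ∑ xy : X × Y,
          (∑ v1, pV1 v1 * PX v1 xy.1) * (∑ v2, pV2 v2 * PY v2 xy.2) * W xy b) := by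
    funext b
    rw [show (∑ v : V1 × V2, pV1 v.1 * pV2 v.2 * ∑ x, ∑ y, PX v.1 x * PY v.2 y * W (x, y) b)
        = ∑ v1, ∑ v2, pV1 v1 * pV2 v2 * ∑ x, ∑ y, PX v1 x * PY v2 y * W (x, y) b from
        Fintype.sum_prod_type _,
      show (∑ xy : X × Y, (∑ v1, pV1 v1 * PX v1 xy.1) * (∑ v2, pV2 v2 * PY v2 xy.2) * W xy b)
        = ∑ x, ∑ y, (∑ v1, pV1 v1 * PX v1 x) * (∑ v2, pV2 v2 * PY v2 y) * W (x, y) b from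
        Fintype.sum_prod_type _]
    exact swap4 _ _ _ _ (fun x y => W (x, y) b)
  have i2 : (∑ v : V1 × V2, pV1 v.1 * pV2 v.2 *
        entropy fun z => ∑ x, ∑ y, PX v.1 x * PY v.2 y * W (x, y) z)
      = ∑ v1, ∑ v2, pV1 v1 * pV2 v2 *
          entropy fun z => ∑ xy : X × Y, PX v1 xy.1 * PY v2 xy.2 * W xy z := by
    rw [show (∑ v : V1 × V2, pV1 v.1 * pV2 v.2 *
          entropy fun z => ∑ x, ∑ y, PX v.1 x * PY v.2 y * W (x, y) z)
        = ∑ v1, ∑ v2, pV1 v1 * pV2 v2 *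
            entropy fun z => ∑ x, ∑ y, PX v1 x * PY v2 y * W (x, y) z from
        Fintype.sum_prod_type _]
    refine Finset.sum_congr rfl fun v1 _ => Finset.sum_congr rfl fun v2 _ => ?_
    refine congrArg (fun t => pV1 v1 * pV2 v2 * t) (congrArg entropy (funext fun z => ?_))
    exact (Fintype.sum_prod_type (fun xy : X × Y => PX v1 xy.1 * PY v2 xy.2 * W xy z)).symm
  have i3 : (∑ xy : X × Y,
        (∑ v1, pV1 v1 * PX v1 xy.1) * (∑ v2, pV2 v2 * PY v2 xy.2) * entropy (W xy))
      = ∑ v1, ∑ v2, pV1 v1 * pV2 v2 *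
          ∑ xy : X × Y, PX v1 xy.1 * PY v2 xy.2 * entropy (W xy) := by
    rw [show (∑ xy : X × Y,
          (∑ v1, pV1 v1 * PX v1 xy.1) * (∑ v2, pV2 v2 * PY v2 xy.2) * entropy (W xy))
        = ∑ x, ∑ y, (∑ v1, pV1 v1 * PX v1 x) * (∑ v2, pV2 v2 * PY v2 y) * entropy (W (x, y))
        from Fintype.sum_prod_type _]
    rw [← swap4 pV1 pV2 PX PY (fun x y => entropy (W (x, y)))]
    refine Finset.sum_congr rfl fun v1 _ => Finset.sum_congr rfl fun v2 _ => ?_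
    refine congrArg (fun t => pV1 v1 * pV2 v2 * t) ?_
    exact (Fintype.sum_prod_type (fun xy : X × Y => PX v1 xy.1 * PY v2 xy.2 * entropy (W xy))).symm
  rw [i1, i2, i3]
  simp only [mul_sub, Finset.sum_sub_distrib]
  ring

end Aux

/-- MAC version of van Dijk's characterization. -/
theorem stmt6 {X Y T Z : Type} [Fintype X] [Fintype Y] [Fintype T] [Fintype Z]
    (Wb : X × Y → T → ℝ) (We : X × Y → Z → ℝ)
    (hWb : ∀ xy, IsPMF (Wb xy)) (hWe : ∀ xy, IsPMF (We xy)) :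
    (∀ (V1 V2 : Type) [Fintype V1] [Fintype V2]
        (pV1 : V1 → ℝ) (pV2 : V2 → ℝ) (PX : V1 → X → ℝ) (PY : V2 → Y → ℝ),
        IsPMF pV1 → IsPMF pV2 → (∀ v1, IsPMF (PX v1)) → (∀ v2, IsPMF (PY v2)) →
        mutualInfo (fun vz : (V1 × V2) × Z =>
            pV1 vz.1.1 * pV2 vz.1.2 *
              ∑ x, ∑ y, PX vz.1.1 x * PY vz.1.2 y * We (x, y) vz.2) ≥
        mutualInfo (fun vt : (V1 × V2) × T =>
            pV1 vt.1.1 * pV2 vt.1.2 *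
              ∑ x, ∑ y, PX vt.1.1 x * PY vt.1.2 y * Wb (x, y) vt.2)) ↔
    ((∀ (pY : Y → ℝ), IsPMF pY → ∀ p q : X → ℝ, IsPMF p → IsPMF q →
        ∀ θ : ℝ, 0 ≤ θ → θ ≤ 1 →
        θ * macDiff Wb We p pY + (1 - θ) * macDiff Wb We q pY ≤
          macDiff Wb We (fun x => θ * p x + (1 - θ) * q x) pY) ∧
     (∀ (pX : X → ℝ), IsPMF pX → ∀ p q : Y → ℝ, IsPMF p → IsPMF q →
        ∀ θ : ℝ, 0 ≤ θ → θ ≤ 1 →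
        θ * macDiff Wb We pX p + (1 - θ) * macDiff Wb We pX q ≤
          macDiff Wb We pX (fun y => θ * p y + (1 - θ) * q y))) := by
  have hWbs : ∀ xy, ∑ t, Wb xy t = 1 := fun xy => (hWb xy).2
  have hWes : ∀ xy, ∑ z, We xy z = 1 := fun xy => (hWe xy).2
  have diff_eq : ∀ (V1 V2 : Type) [Fintype V1] [Fintype V2]
      (pV1 : V1 → ℝ) (pV2 : V2 → ℝ) (PX : V1 → X → ℝ) (PY : V2 → Y → ℝ),
      (∀ v1, ∑ x, PX v1 x = 1) → (∀ v2, ∑ y, PY v2 y = 1) →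
      mutualInfo (fun vz : (V1 × V2) × Z =>
          pV1 vz.1.1 * pV2 vz.1.2 *
            ∑ x, ∑ y, PX vz.1.1 x * PY vz.1.2 y * We (x, y) vz.2) -
        mutualInfo (fun vt : (V1 × V2) × T =>
          pV1 vt.1.1 * pV2 vt.1.2 *
            ∑ x, ∑ y, PX vt.1.1 x * PY vt.1.2 y * Wb (x, y) vt.2)
      = macDiff Wb We (fun x => ∑ v1, pV1 v1 * PX v1 x) (fun y => ∑ v2, pV2 v2 * PY v2 y)
        - ∑ v1, ∑ v2, pV1 v1 * pV2 v2 * macDiff Wb We (PX v1) (PY v2) := by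
    intro V1 V2 _ _ pV1 pV2 PX PY hPXs hPYs
    rw [key_identity We hWes pV1 pV2 PX PY hPXs hPYs,
      key_identity Wb hWbs pV1 pV2 PX PY hPXs hPYs]
    simp only [macDiff, mul_sub, Finset.sum_sub_distrib]
    ring
  constructor
  · -- forward: Markov chains ⇒ separate concavity
    intro hL
    constructor
    · intro pY hpY p q hp hq θ h0 h1
      have pmf1 : IsPMF (fun b : Bool => if b then θ else 1 - θ) := by
        constructor
        · intro b; cases b <;> simp <;> linarith
        · rw [Fintype.sum_bool]; simp
      have pmf2 : IsPMF (fun _ : Unit => (1 : ℝ)) := ⟨fun _ => zero_le_one, by simp⟩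
      have pmf3 : ∀ b : Bool, IsPMF ((fun b : Bool => if b then p else q) b) := by
        intro b; cases b <;> simpa
      have pmf4 : ∀ u : Unit, IsPMF ((fun _ : Unit => pY) u) := fun _ => hpY
      have h := hL Bool Unit (fun b => if b then θ else 1 - θ) (fun _ => 1)
        (fun b => if b then p else q) (fun _ => pY) pmf1 pmf2 pmf3 pmf4
      rw [ge_iff_le, ← sub_nonneg,
        diff_eq Bool Unit (fun b => if b then θ else 1 - θ) (fun _ => 1)
          (fun b => if b then p else q) (fun _ => pY)
          (fun b => by cases b <;> simp [hp.2, hq.2]) (fun _ => hpY.2),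
        sub_nonneg] at h
      refine le_trans (le_of_eq ?_) (le_trans h (le_of_eq ?_))
      · rw [Fintype.sum_bool]
        simp
      · congr 1
        · funext x
          rw [Fintype.sum_bool]
          simp
        · funext y
          simp
    · intro pX hpX p q hp hq θ h0 h1
      have pmf1 : IsPMF (fun _ : Unit => (1 : ℝ)) := ⟨fun _ => zero_le_one, by simp⟩
      have pmf2 : IsPMF (fun b : Bool => if b then θ else 1 - θ) := by
        constructor
        · intro b; cases b <;> simp <;> linarith
        · rw [Fintype.sum_bool]; simp
      have pmf3 : ∀ u : Unit, IsPMF ((fun _ : Unit => pX) u) := fun _ => hpX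
      have pmf4 : ∀ b : Bool, IsPMF ((fun b : Bool => if b then p else q) b) := by
        intro b; cases b <;> simpa
      have h := hL Unit Bool (fun _ => 1) (fun b => if b then θ else 1 - θ)
        (fun _ => pX) (fun b => if b then p else q) pmf1 pmf2 pmf3 pmf4
      rw [ge_iff_le, ← sub_nonneg,
        diff_eq Unit Bool (fun _ => 1) (fun b => if b then θ else 1 - θ)
          (fun _ => pX) (fun b => if b then p else q)
          (fun _ => hpX.2) (fun b => by cases b <;> simp [hp.2, hq.2]),
        sub_nonneg] at h
      refine le_trans (le_of_eq ?_) (le_trans h (le_of_eq ?_))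
      · simp only [Finset.univ_unique, Finset.sum_singleton]
        rw [Fintype.sum_bool]
        simp
      · congr 1
        · funext x
          simp
        · funext y
          rw [Fintype.sum_bool]
          simp
  · -- backward: separate concavity ⇒ Markov chains
    rintro ⟨hC1, hC2⟩ V1 V2 _ _ pV1 pV2 PX PY hpV1 hpV2 hPX hPY
    have conc1 : ∀ r : Y → ℝ, IsPMF r →
        ConcaveOn ℝ (stdSimplex ℝ X) (fun pp => macDiff Wb We pp r) := by
      intro r hr
      refine ⟨convex_stdSimplex ℝ X, ?_⟩
      intro u hu v hv a b ha hb hab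
      have h := hC1 r hr u v hu hv a ha (by linarith)
      have hb' : b = 1 - a := by linarith
      subst hb'
      simp only [smul_eq_mul]
      have : (a • u + (1 - a) • v) = fun x => a * u x + (1 - a) * v x := by
        funext x; simp [smul_eq_mul]
      rw [this]
      exact h
    have conc2 : ∀ r : X → ℝ, IsPMF r →
        ConcaveOn ℝ (stdSimplex ℝ Y) (fun pp => macDiff Wb We r pp) := by
      intro r hr
      refine ⟨convex_stdSimplex ℝ Y, ?_⟩
      intro u hu v hv a b ha hb hab
      have h := hC2 r hr u v hu hv a ha (by linarith)
      have hb' : b = 1 - a := by linarith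
      subst hb'
      simp only [smul_eq_mul]
      have : (a • u + (1 - a) • v) = fun y => a * u y + (1 - a) * v y := by
        funext y; simp [smul_eq_mul]
      rw [this]
      exact h
    -- mixtures are PMFs
    have hmixY : IsPMF (fun y => ∑ v2, pV2 v2 * PY v2 y) := by
      constructor
      · intro y
        exact Finset.sum_nonneg fun v2 _ => mul_nonneg (hpV2.1 v2) ((hPY v2).1 y)
      · rw [Finset.sum_comm]
        simp_rw [← Finset.mul_sum]
        simp_rw [(fun v2 => (hPY v2).2 : ∀ v2, ∑ y, PY v2 y = 1), mul_one]
        exact hpV2.2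
    have hmixX : IsPMF (fun x => ∑ v1, pV1 v1 * PX v1 x) := by
      constructor
      · intro x
        exact Finset.sum_nonneg fun v1 _ => mul_nonneg (hpV1.1 v1) ((hPX v1).1 x)
      · rw [Finset.sum_comm]
        simp_rw [← Finset.mul_sum]
        simp_rw [(fun v1 => (hPX v1).2 : ∀ v1, ∑ x, PX v1 x = 1), mul_one]
        exact hpV1.2
    rw [ge_iff_le, ← sub_nonneg,
      diff_eq V1 V2 pV1 pV2 PX PY (fun v1 => (hPX v1).2) (fun v2 => (hPY v2).2),
      sub_nonneg]
    -- inner Jensen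
    have inner : ∀ v1, ∑ v2, pV2 v2 * macDiff Wb We (PX v1) (PY v2)
        ≤ macDiff Wb We (PX v1) (fun y => ∑ v2, pV2 v2 * PY v2 y) := by
      intro v1
      have h := (conc2 (PX v1) (hPX v1)).le_map_sum
        (t := Finset.univ) (w := pV2) (p := PY)
        (fun v2 _ => hpV2.1 v2) hpV2.2 (fun v2 _ => hPY v2)
      have hs : (∑ v2, pV2 v2 • PY v2) = fun y => ∑ v2, pV2 v2 * PY v2 y := by
        funext y; simp [Finset.sum_apply]
      rw [hs] at h
      simpa [smul_eq_mul] using h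
    have outer := (conc1 (fun y => ∑ v2, pV2 v2 * PY v2 y) hmixY).le_map_sum
      (t := Finset.univ) (w := pV1) (p := PX)
      (fun v1 _ => hpV1.1 v1) hpV1.2 (fun v1 _ => hPX v1)
    have hs : (∑ v1, pV1 v1 • PX v1) = fun x => ∑ v1, pV1 v1 * PX v1 x := by
      funext x; simp [Finset.sum_apply]
    rw [hs] at outer
    simp only [smul_eq_mul] at outer
    calc ∑ v1, ∑ v2, pV1 v1 * pV2 v2 * macDiff Wb We (PX v1) (PY v2)
        = ∑ v1, pV1 v1 * ∑ v2, pV2 v2 * macDiff Wb We (PX v1) (PY v2) := by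
          refine Finset.sum_congr rfl fun v1 _ => ?_
          rw [Finset.mul_sum]
          exact Finset.sum_congr rfl fun v2 _ => by ring
      _ ≤ ∑ v1, pV1 v1 * macDiff Wb We (PX v1) (fun y => ∑ v2, pV2 v2 * PY v2 y) := by
          refine Finset.sum_le_sum fun v1 _ => ?_
          exact mul_le_mul_of_nonneg_left (inner v1) (hpV1.1 v1)
      _ ≤ macDiff Wb We (fun x => ∑ v1, pV1 v1 * PX v1 x)
            (fun y => ∑ v2, pV2 v2 * PY v2 y) := outer
end

section
/- Let (M, Z) be a pair of random variables where M is uniformly distributed on a finite set of size K and Z takes values in a finite set Z^n (n-fold product of a finite set Z). Suppose that for every message m, the total variation distance ε_m := ‖P_Z − P_{Z|M=m}‖ satisfies ε_m ≤ ε ≤ 1/2. Then I(Z ∧ M) ≤ ε · log(|Z|^n / ε). -/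
/-!
Conditioning on `M` gives `I(Z ∧ M) = ∑ₘ P_M(m) (H(P_Z) - H(P_{Z|M=m}))`, and each bracket is
at most `ε log(|Z|ⁿ / ε)` by the continuity of entropy. That continuity bound combines the
pointwise estimate `|η a - η b| ≤ η |a - b|` for `η t = -t log t` and `|a - b| ≤ 1/2`, Jensen's
inequality for the concave `η`, and the monotonicity of `η` on `[0, 1/e]`.
-/

open scoped BigOperators

noncomputable def tv {A : Type} [Fintype A] (μ ν : A → ℝ) : ℝ :=
  ∑ a, |μ a - ν a|

open Real

theorem negMulLog_add_le {x y : ℝ} (hx : 0 ≤ x) (hy : 0 ≤ y) :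
    negMulLog (x + y) ≤ negMulLog x + negMulLog y := by
  have mul_log_le : ∀ {a b : ℝ}, 0 ≤ a → 0 ≤ b → a * log a ≤ a * log (a + b) := by
    intro a b ha hb
    rcases ha.eq_or_lt with rfl | ha
    · simp
    · exact mul_le_mul_of_nonneg_left (log_le_log ha (by linarith)) ha.le
  have hx' := mul_log_le hx hy
  have hy' := mul_log_le hy hx
  rw [add_comm y x] at hy'
  simp only [negMulLog, neg_mul, add_mul]
  linarith

theorem negMulLog_one_sub_le {d : ℝ} (hd₀ : 0 ≤ d) (hd : d ≤ 1 / 2) :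
    negMulLog (1 - d) ≤ negMulLog d := by
  -- `ψ` vanishes at `0` and `1/2` and is concave on `[0, 1/2]`.
  set ψ : ℝ → ℝ := fun x => negMulLog x - negMulLog (1 - x)
  have hψ : ConcaveOn ℝ (Set.Icc 0 (1 / 2)) ψ := by
    refine concaveOn_of_hasDerivWithinAt2_nonpos (convex_Icc _ _)
      (f' := fun x => -log x - log (1 - x) - 2) (f'' := fun x => -x⁻¹ + (1 - x)⁻¹)
      (continuous_negMulLog.sub
        (continuous_negMulLog.comp (continuous_const.sub continuous_id))).continuousOn
      ?_ ?_ ?_ <;> rw [interior_Icc] <;> rintro x ⟨hx₀, hx⟩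
    · have h1x : 1 - x ≠ 0 := by linarith
      exact (((hasDerivAt_negMulLog hx₀.ne').sub ((hasDerivAt_negMulLog h1x).comp_const_sub 1 x)
        ).congr_deriv (by ring)).hasDerivWithinAt
    · have h1x : 1 - x ≠ 0 := by linarith
      have := ((hasDerivAt_log hx₀.ne').neg.sub
        ((hasDerivAt_log h1x).comp_const_sub 1 x)).sub_const 2
      exact (this.congr_deriv (by ring)).hasDerivWithinAt
    · have : (1 - x)⁻¹ ≤ x⁻¹ := inv_anti₀ hx₀ (by linarith)
      linarith
  have key := hψ.2 (show (0 : ℝ) ∈ Set.Icc 0 (1 / 2) by norm_num)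
    (show (1 / 2 : ℝ) ∈ Set.Icc 0 (1 / 2) by norm_num)
    (show 0 ≤ 1 - 2 * d by linarith) (show 0 ≤ 2 * d by linarith) (by ring)
  have hd' : (1 - 2 * d) • (0 : ℝ) + (2 * d) • (1 / 2 : ℝ) = d := by
    rw [smul_zero, zero_add, smul_eq_mul]; ring
  rw [hd'] at key
  norm_num [ψ] at key
  linarith

theorem negMulLog_sub_negMulLog_add_le {x d : ℝ} (hx : 0 ≤ x) (hd₀ : 0 ≤ d) (hd : d ≤ 1 / 2)
    (hxd : x + d ≤ 1) : negMulLog x - negMulLog (x + d) ≤ negMulLog d := by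
  rcases hd₀.eq_or_lt with rfl | hd₀
  · simp
  -- `g` increases on `[0, 1 - d]`, so `g x ≤ g (1 - d) = η (1 - d) ≤ η d`.
  set g : ℝ → ℝ := fun y => negMulLog y - negMulLog (y + d)
  have hg' : ∀ y ∈ Set.Ioo 0 (1 - d), HasDerivAt g (log (y + d) - log y) y := by
    intro y hy
    exact ((hasDerivAt_negMulLog hy.1.ne').sub
      ((hasDerivAt_negMulLog (by linarith [hy.1])).comp_add_const y d)).congr_deriv (by ring)
  have hg : MonotoneOn g (Set.Icc 0 (1 - d)) := by
    refine monotoneOn_of_deriv_nonneg (convex_Icc _ _)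
      (continuous_negMulLog.sub
        (continuous_negMulLog.comp (continuous_id.add continuous_const))).continuousOn
      ?_ ?_ <;> rw [interior_Icc]
    · exact fun y hy => (hg' y hy).differentiableAt.differentiableWithinAt
    · intro y hy
      rw [(hg' y hy).deriv, sub_nonneg]
      exact log_le_log hy.1 (by linarith)
  have := hg ⟨hx, by linarith⟩ ⟨by linarith, le_rfl⟩ (by linarith : x ≤ 1 - d)
  simp only [g, sub_add_cancel, negMulLog_one, sub_zero] at this
  linarith [negMulLog_one_sub_le hd₀.le hd]

theorem abs_negMulLog_sub_le {a b : ℝ} (ha : 0 ≤ a) (hb : 0 ≤ b) (ha₁ : a ≤ 1) (hb₁ : b ≤ 1)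
    (hab : |a - b| ≤ 1 / 2) : |negMulLog a - negMulLog b| ≤ negMulLog |a - b| := by
  wlog h : a ≤ b generalizing a b
  · rw [abs_sub_comm, abs_sub_comm a]
    exact this hb ha hb₁ ha₁ (by rwa [abs_sub_comm]) (le_of_not_ge h)
  obtain ⟨d, hd, rfl⟩ : ∃ d, 0 ≤ d ∧ b = a + d := ⟨b - a, by linarith, by ring⟩
  rw [show a - (a + d) = -d by ring, abs_neg, abs_of_nonneg hd] at hab ⊢
  rw [abs_le]
  constructor
  · linarith [negMulLog_add_le ha hd]
  · exact negMulLog_sub_negMulLog_add_le ha hd hab hb₁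

theorem monotoneOn_negMulLog : MonotoneOn negMulLog (Set.Icc 0 (exp (-1))) := by
  refine monotoneOn_of_deriv_nonneg (convex_Icc _ _) continuous_negMulLog.continuousOn
    ?_ ?_ <;> rw [interior_Icc]
  · exact fun x hx => (differentiableAt_negMulLog_iff.2 hx.1.ne').differentiableWithinAt
  · intro x hx
    rw [deriv_negMulLog hx.1.ne']
    linarith [(log_le_log hx.1 hx.2.le).trans_eq (log_exp (-1))]

theorem sum_negMulLog_le_card_mul {A : Type} [Fintype A] (f : A → ℝ) (hf : ∀ a, 0 ≤ f a) :
    ∑ a, negMulLog (f a) ≤ Fintype.card A * negMulLog ((∑ a, f a) / Fintype.card A) := by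
  rcases isEmpty_or_nonempty A with hA | hA
  · simp
  have hN : (0 : ℝ) < Fintype.card A := by exact_mod_cast Fintype.card_pos
  have := concaveOn_negMulLog.le_map_sum (t := Finset.univ) (w := fun _ => (Fintype.card A : ℝ)⁻¹)
    (p := f) (fun _ _ => by positivity) (by simp [hN.ne']) (fun a _ => hf a)
  simp only [smul_eq_mul, ← Finset.mul_sum] at this
  rwa [inv_mul_le_iff₀ hN, inv_mul_eq_div] at this

theorem card_mul_negMulLog_div {N δ : ℝ} (hN : 0 < N) :
    N * negMulLog (δ / N) = δ * log (N / δ) := by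
  rcases eq_or_ne δ 0 with rfl | hδ
  · simp
  rw [negMulLog, log_div hδ hN.ne', log_div hN.ne' hδ]
  field_simp
  ring

theorem IsPMF.le_one {A : Type} [Fintype A] {p : A → ℝ} (hp : IsPMF p) (a : A) : p a ≤ 1 :=
  hp.2 ▸ Finset.single_le_sum (fun b _ => hp.1 b) (Finset.mem_univ a)

theorem abs_sum_negMulLog_sub_le {A : Type} [Fintype A] {P Q : A → ℝ} (hP : IsPMF P)
    (hQ : IsPMF Q) {δ : ℝ} (hδ : δ ≤ 1 / 2) (hPQ : tv P Q ≤ δ) :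
    |∑ a, negMulLog (P a) - ∑ a, negMulLog (Q a)| ≤ δ * log (Fintype.card A / δ) := by
  have htv : 0 ≤ tv P Q := Finset.sum_nonneg fun a _ => abs_nonneg _
  rcases subsingleton_or_nontrivial A with hA | hA
  · have hPeq : P = Q := funext fun a => by
      rw [← Fintype.sum_subsingleton P a, ← Fintype.sum_subsingleton Q a, hP.2, hQ.2]
    rw [hPeq, sub_self, abs_zero]
    obtain hA | hA : Fintype.card A = 0 ∨ Fintype.card A = 1 := by
      have := Fintype.card_le_one_iff_subsingleton.2 hA; omega
    · simp [hA]
    · rw [hA, Nat.cast_one, one_div, log_inv, mul_neg, ← neg_mul]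
      exact negMulLog_nonneg (htv.trans hPQ) (by linarith)
  -- With at least two points, `δ / |A| ≤ 1/4 < 1/e` lies where `η` is increasing.
  have hN : (2 : ℝ) ≤ Fintype.card A := by exact_mod_cast Fintype.one_lt_card
  calc |∑ a, negMulLog (P a) - ∑ a, negMulLog (Q a)|
      ≤ ∑ a, |negMulLog (P a) - negMulLog (Q a)| := by
        rw [← Finset.sum_sub_distrib]; exact Finset.abs_sum_le_sum_abs _ _
    _ ≤ ∑ a, negMulLog |P a - Q a| := by
        refine Finset.sum_le_sum fun a _ => abs_negMulLog_sub_le (hP.1 a) (hQ.1 a)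
          (hP.le_one a) (hQ.le_one a) (le_trans ?_ (hPQ.trans hδ))
        exact Finset.single_le_sum (f := fun a => |P a - Q a|) (fun b _ => abs_nonneg _)
          (Finset.mem_univ a)
    _ ≤ Fintype.card A * negMulLog (tv P Q / Fintype.card A) :=
        sum_negMulLog_le_card_mul _ fun a => abs_nonneg _
    _ ≤ Fintype.card A * negMulLog (δ / Fintype.card A) := by
        have hsδ : tv P Q / Fintype.card A ≤ δ / Fintype.card A := by gcongr
        have hδN : δ / Fintype.card A ≤ exp (-1) := by
          calc δ / Fintype.card A ≤ (1 / 2) / 2 := by gcongr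
            _ ≤ exp (-1) := by linarith [exp_neg_one_gt_d9]
        have hs₀ : 0 ≤ tv P Q / Fintype.card A := by positivity
        gcongr
        exact monotoneOn_negMulLog ⟨hs₀, hsδ.trans hδN⟩ ⟨hs₀.trans hsδ, hδN⟩ hsδ
    _ = δ * log (Fintype.card A / δ) := card_mul_negMulLog_div (by linarith)

theorem mul_negMulLog_div {w : ℝ} (hw : w ≠ 0) (x : ℝ) :
    w * negMulLog (x / w) = negMulLog x + x * log w := by
  rw [div_eq_mul_inv, negMulLog_mul]
  simp only [negMulLog_def, log_inv]
  field_simp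

theorem sum_mul_sum_negMulLog_div_sum {A : Type} [Fintype A] (f : A → ℝ) (hf : ∀ a, 0 ≤ f a) :
    (∑ a, f a) * ∑ a, negMulLog (f a / ∑ a', f a') =
      ∑ a, negMulLog (f a) - negMulLog (∑ a, f a) := by
  rcases eq_or_ne (∑ a, f a) 0 with hw | hw
  · have hf0 := (Fintype.sum_eq_zero_iff_of_nonneg hf).1 hw
    simp [hf0]
  rw [Finset.mul_sum, Finset.sum_congr rfl fun a _ => mul_negMulLog_div hw (f a),
    Finset.sum_add_distrib, ← Finset.sum_mul, negMulLog]
  ring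

theorem entropy_eq_sum_negMulLog_div {A : Type} [Fintype A] (p : A → ℝ) :
    entropy p = (∑ a, negMulLog (p a)) / log 2 := by
  simp only [entropy, negMulLog, logb, Finset.sum_div, ← Finset.sum_neg_distrib]
  exact Finset.sum_congr rfl fun a _ => by ring

theorem abs_entropy_sub_le {A : Type} [Fintype A] {P Q : A → ℝ} (hP : IsPMF P)
    (hQ : IsPMF Q) {δ : ℝ} (hδ : δ ≤ 1 / 2) (hPQ : tv P Q ≤ δ) :
    |entropy P - entropy Q| ≤ δ * logb 2 (Fintype.card A / δ) := by
  have hlog2 : 0 < log 2 := log_pos one_lt_two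
  rw [entropy_eq_sum_negMulLog_div, entropy_eq_sum_negMulLog_div, ← sub_div, abs_div,
    abs_of_pos hlog2, logb, mul_div_assoc']
  exact div_le_div_of_nonneg_right (abs_sum_negMulLog_sub_le hP hQ hδ hPQ) hlog2.le

-- `P_{A|B=b}`; for `b` of probability zero it is the zero function, since `x / 0 = 0`.
noncomputable def condDist {A B : Type} [Fintype A] (p : A × B → ℝ) (b : B) : A → ℝ :=
  fun a => p (a, b) / ∑ a', p (a', b)

noncomputable def condEntropy {A B : Type} [Fintype A] [Fintype B] (p : A × B → ℝ) : ℝ :=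
  ∑ b, (∑ a, p (a, b)) * entropy (condDist p b)

theorem mutualInfo_eq_entropy_sub_condEntropy {A B : Type} [Fintype A] [Fintype B]
    (p : A × B → ℝ) (hp : ∀ x, 0 ≤ p x) :
    mutualInfo p = entropy (fun a => ∑ b, p (a, b)) - condEntropy p := by
  have hcond : condEntropy p =
      (∑ b, (∑ a, negMulLog (p (a, b)) - negMulLog (∑ a, p (a, b)))) / log 2 := by
    simp only [condEntropy, entropy_eq_sum_negMulLog_div, condDist, mul_div_assoc',
      ← Finset.sum_div]
    exact congrArg (· / log 2) (Finset.sum_congr rfl fun b _ =>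
      sum_mul_sum_negMulLog_div_sum _ fun a => hp _)
  rw [mutualInfo, hcond, entropy_eq_sum_negMulLog_div, entropy_eq_sum_negMulLog_div,
    entropy_eq_sum_negMulLog_div, Fintype.sum_prod_type, Finset.sum_comm, Finset.sum_sub_distrib]
  ring

theorem mutualInfo_le_of_tv_condDist_le {A B : Type} [Fintype A] [Fintype B] {p : A × B → ℝ}
    (hp : IsPMF p) {δ : ℝ} (hδ : δ ≤ 1 / 2)
    (hclose : ∀ b, 0 < ∑ a, p (a, b) → tv (fun a => ∑ b, p (a, b)) (condDist p b) ≤ δ) :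
    mutualInfo p ≤ δ * logb 2 (Fintype.card A / δ) := by
  have hmarg : IsPMF fun a => ∑ b, p (a, b) :=
    ⟨fun a => Finset.sum_nonneg fun b _ => hp.1 _, by rw [← hp.2, Fintype.sum_prod_type]⟩
  have hw : ∑ b, ∑ a, p (a, b) = 1 := by rw [← hp.2, Fintype.sum_prod_type, Finset.sum_comm]
  have hcond (b : B) (hb : 0 < ∑ a, p (a, b)) : IsPMF (condDist p b) :=
    ⟨fun a => div_nonneg (hp.1 _) hb.le, by
      simp only [condDist]; rw [← Finset.sum_div, div_self hb.ne']⟩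
  rw [mutualInfo_eq_entropy_sub_condEntropy p hp.1, condEntropy]
  calc entropy (fun a => ∑ b, p (a, b)) - ∑ b, (∑ a, p (a, b)) * entropy (condDist p b)
      = ∑ b, (∑ a, p (a, b)) * (entropy (fun a => ∑ b, p (a, b)) - entropy (condDist p b)) := by
        simp only [mul_sub, Finset.sum_sub_distrib, ← Finset.sum_mul, hw, one_mul]
    _ ≤ ∑ b, (∑ a, p (a, b)) * (δ * logb 2 (Fintype.card A / δ)) := by
        refine Finset.sum_le_sum fun b _ => ?_
        rcases (Fintype.sum_nonneg (f := fun a => p (a, b)) fun a => hp.1 _).eq_or_lt with hb | hb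
        · simp [← hb]
        exact mul_le_mul_of_nonneg_left ((le_abs_self _).trans
          (abs_entropy_sub_le hmarg (hcond b hb) hδ (hclose b hb))) hb.le
    _ = δ * logb 2 (Fintype.card A / δ) := by rw [← Finset.sum_mul, hw, one_mul]

theorem stmt11_general {Z : Type} [Fintype Z] (n K : ℕ)
    (p : Fin K × (Fin n → Z) → ℝ) (hp : IsPMF p)
    (huniform : ∀ m, ∑ z : Fin n → Z, p (m, z) = 1 / (K : ℝ))
    (ε : ℝ) (hε : ε ≤ 1 / 2)
    (hclose : ∀ m : Fin K,
      tv (fun z => ∑ m', p (m', z)) (fun z => (K : ℝ) * p (m, z)) ≤ ε) :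
    mutualInfo (fun q : (Fin n → Z) × Fin K => p (q.2, q.1)) ≤
      ε * Real.logb 2 ((Fintype.card Z : ℝ) ^ n / ε) := by
  have hp' : IsPMF fun q : (Fin n → Z) × Fin K => p (q.2, q.1) :=
    ⟨fun q => hp.1 _, hp.2 ▸ Fintype.sum_equiv (Equiv.prodComm _ _) _ _ fun _ => rfl⟩
  have hcard : (Fintype.card (Fin n → Z) : ℝ) = Fintype.card Z ^ n := by simp
  rw [← hcard]
  refine mutualInfo_le_of_tv_condDist_le hp' hε fun m _ => ?_
  convert hclose m using 2
  funext z
  simp [condDist, huniform m, mul_comm]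

/-- if each conditional output distribution is `ε`-close in total
variation to the output marginal, `ε ≤ 1/2`, then `I(Z ∧ M) ≤ ε·log(|Z|ⁿ/ε)`. -/
theorem stmt11 {Z : Type} [Fintype Z] (n K : ℕ) (hK : 0 < K) (hZ : 0 < Fintype.card Z)
    (p : Fin K × (Fin n → Z) → ℝ) (hp : IsPMF p)
    (huniform : ∀ m, ∑ z : Fin n → Z, p (m, z) = 1 / (K : ℝ))
    (ε : ℝ) (hε : ε ≤ 1 / 2)
    (hclose : ∀ m : Fin K,
      tv (fun z => ∑ m', p (m', z)) (fun z => (K : ℝ) * p (m, z)) ≤ ε) :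
    mutualInfo (fun q : (Fin n → Z) × Fin K => p (q.2, q.1)) ≤
      ε * Real.logb 2 ((Fintype.card Z : ℝ) ^ n / ε) :=
  stmt11_general n K p hp huniform ε hε hclose
end

section
/- Let J, C1, C2 be nonnegative reals with J < C1 + C2 and C1, C2 > 0, and let β range over [max(1 − C2/J, 0), min(C1/J, 1)] (all of [0,1] if J = 0). For real constants s1, s2, m, let K_β ⊆ ℝ² be the set of nonnegative pairs (R1, R2) with R1 ≤ s1 + C1 − β·J, R2 ≤ s2 + C2 − (1−β)·J, R1 + R2 ≤ m. Then the union of K_β over all admissible β equals the set of nonnegative pairs with R1 ≤ s1 + C1 − [J − C2]₊, R2 ≤ s2 + C2 − [J − C1]₊, R1 + R2 ≤ m, provided each K_β is nonempty and s1 + s2 + C1 + C2 − J ≥ m ≥ 0. -/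
/-- the union over the trade-off parameter `β` of the conferencing
rate regions equals a single region with positive-part corrections. -/
theorem stmt16 (J C1 C2 s1 s2 m : ℝ)
    (hJ : 0 ≤ J) (hC1 : 0 < C1) (hC2 : 0 < C2) (hJC : J < C1 + C2)
    (β0 β1 : ℝ)
    (hβ0 : β0 = if J = 0 then 0 else max (1 - C2 / J) 0)
    (hβ1 : β1 = if J = 0 then 1 else min (C1 / J) 1)
    (K : ℝ → Set (ℝ × ℝ))
    (hK : ∀ β, K β = {R : ℝ × ℝ | 0 ≤ R.1 ∧ 0 ≤ R.2 ∧
        R.1 ≤ s1 + C1 - β * J ∧ R.2 ≤ s2 + C2 - (1 - β) * J ∧ R.1 + R.2 ≤ m})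
    (hne : ∀ β ∈ Set.Icc β0 β1, (K β).Nonempty)
    (hm0 : 0 ≤ m) (hm : m ≤ s1 + s2 + C1 + C2 - J) :
    (⋃ β ∈ Set.Icc β0 β1, K β) = {R : ℝ × ℝ | 0 ≤ R.1 ∧ 0 ≤ R.2 ∧
        R.1 ≤ s1 + C1 - max (J - C2) 0 ∧
        R.2 ≤ s2 + C2 - max (J - C1) 0 ∧
        R.1 + R.2 ≤ m} := by
  have key1 : β0 * J = max (J - C2) 0 := by
    rcases hJ.eq_or_lt with h | h
    · obtain rfl : J = 0 := h.symm
      rw [hβ0, if_pos rfl, max_eq_right (by linarith : (0:ℝ) - C2 ≤ 0)]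
      ring
    · rw [hβ0, if_neg h.ne', max_mul_of_nonneg _ _ h.le, zero_mul]
      congr 1
      field_simp
  have key2 : (1 - β1) * J = max (J - C1) 0 := by
    rcases hJ.eq_or_lt with h | h
    · obtain rfl : J = 0 := h.symm
      rw [hβ1, if_pos rfl, max_eq_right (by linarith : (0:ℝ) - C1 ≤ 0)]
      ring
    · rw [hβ1, if_neg h.ne']
      rcases le_total C1 J with hc | hc
      · rw [min_eq_left ((div_le_one h).mpr hc),
          max_eq_left (by linarith : 0 ≤ J - C1)]
        field_simp
      · rw [min_eq_right ((one_le_div h).mpr hc),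
          max_eq_right (by linarith : J - C1 ≤ 0)]
        ring
  ext R
  simp only [Set.mem_iUnion, Set.mem_setOf_eq, Set.mem_Icc, exists_prop]
  constructor
  · rintro ⟨β, ⟨hb0, hb1⟩, hmem⟩
    rw [hK] at hmem
    obtain ⟨h1, h2, h3, h4, h5⟩ := hmem
    have e1 : β0 * J ≤ β * J := mul_le_mul_of_nonneg_right hb0 hJ
    have e2 : (1 - β1) * J ≤ (1 - β) * J :=
      mul_le_mul_of_nonneg_right (by linarith) hJ
    exact ⟨h1, h2, by linarith [key1 ▸ e1], by linarith [key2 ▸ e2], h5⟩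
  · rintro ⟨h1, h2, h3, h4, h5⟩
    rcases hJ.eq_or_lt with h | h
    · obtain rfl : J = 0 := h.symm
      rw [max_eq_right (by linarith : (0:ℝ) - C2 ≤ 0)] at h3
      rw [max_eq_right (by linarith : (0:ℝ) - C1 ≤ 0)] at h4
      refine ⟨β0, ⟨le_refl _, ?_⟩, ?_⟩
      · rw [hβ0, hβ1, if_pos rfl, if_pos rfl]; norm_num
      · rw [hK]
        exact ⟨h1, h2, by linarith [mul_zero β0], by nlinarith, h5⟩
    · set q : ℝ := (J - s2 - C2 + R.2) / J with hq
      have hqJ : q * J = J - s2 - C2 + R.2 := div_mul_cancel₀ _ h.ne'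
      have hβ1J : β1 * J = J - max (J - C1) 0 := by linarith [key2]
      have hb' : max (J - C2) 0 ≤ J - max (J - C1) 0 := by
        rcases max_cases (J - C1) 0 with ⟨e, _⟩ | ⟨e, _⟩ <;>
          rcases max_cases (J - C2) 0 with ⟨f, _⟩ | ⟨f, _⟩ <;>
          rw [e, f] <;> linarith
      have hβ01 : β0 ≤ β1 := by
        have hb : β0 * J ≤ β1 * J := by rw [key1, hβ1J]; exact hb'
        exact le_of_mul_le_mul_right hb h
      have hqβ1 : q ≤ β1 := by
        have hb : q * J ≤ β1 * J := by rw [hqJ, hβ1J]; linarith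
        exact le_of_mul_le_mul_right hb h
      refine ⟨max β0 q, ⟨le_max_left _ _, max_le hβ01 hqβ1⟩, ?_⟩
      rw [hK]
      have hmax : max β0 q * J = max (β0 * J) (q * J) :=
        max_mul_of_nonneg _ _ h.le
      have hup : max β0 q * J ≤ s1 + C1 - R.1 := by
        rw [hmax]
        refine max_le ?_ ?_
        · rw [key1]; linarith
        · rw [hqJ]; linarith
      have hlow : J - s2 - C2 + R.2 ≤ max β0 q * J := by
        rw [← hqJ]
        exact mul_le_mul_of_nonneg_right (le_max_right _ _) hJ
      exact ⟨h1, h2, by linarith, by linarith, h5⟩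
end
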